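/- Let (x̂, ŷ) = σ(x, y) and let v̂_1, …, v̂_n be the vertices built from (x̂, ŷ) by the same construction as v_1, …, v_n are built from (x, y). Then v̂_i = (−x̄_{n−i}, ȳ_{n−i}) for every i = 1, …, n−1, and v̂_n = v_n = (0,0). In other words, applying the substitution σ amounts to reflecting each vertex across the vertical axis and reversing the numbering of the vertices. -/
import Mathlib


/-- The points `u_k = (x_1 + ∑_{i=1}^k (−1)^i x_{2i}, y_1 + ∑_{i=1}^k (−1)^i y_{2i})`. -/
noncomputable def uPt (x y : ℕ → ℝ) (k : ℕ) : ℝ × ℝ :=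
  (x 1 + ∑ i ∈ Finset.Icc 1 k, (-1 : ℝ) ^ i * x (2 * i),
   y 1 + ∑ i ∈ Finset.Icc 1 k, (-1 : ℝ) ^ i * y (2 * i))

/-- The points `w_k = (∑_{i=0}^k (−1)^{i+1} x_{2i+1}, ∑_{i=0}^k (−1)^i y_{2i+1})`. -/
noncomputable def wPt (x y : ℕ → ℝ) (k : ℕ) : ℝ × ℝ :=
  (∑ i ∈ Finset.range (k + 1), (-1 : ℝ) ^ (i + 1) * x (2 * i + 1),
   ∑ i ∈ Finset.range (k + 1), (-1 : ℝ) ^ i * y (2 * i + 1))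

/-- The vertices of the polygon: `v_n = (0,0)`, `v_{n/2} = (0,1)`,
`v_i = u_{2i−1}` and `v_{n−i} = w_{2i−1}` for `i = 1, …, ⌊(n−2)/4⌋`, and
`v_{n/2−i} = w_{2(i−1)}`, `v_{n/2+i} = u_{2(i−1)}` for `i = 1, …, ⌈(n−2)/4⌉`. -/
noncomputable def vPt (n : ℕ) (x y : ℕ → ℝ) (i : ℕ) : ℝ × ℝ :=
  if i = n / 2 then (0, 1)
  else if 1 ≤ i ∧ i ≤ (n - 2) / 4 then uPt x y (2 * i - 1)
  else if i < n / 2 then wPt x y (2 * (n / 2 - i - 1))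
  else if n / 2 < i ∧ i ≤ n / 2 + ((n - 2) + 3) / 4 then uPt x y (2 * (i - n / 2 - 1))
  else if i < n then wPt x y (2 * (n - i) - 1)
  else (0, 0)

/-- The substitution `σ` swapping `x_{2i} ↔ x_{2i+1}` for each `i ≥ 1`,
and fixing `x_1` (and the irrelevant `x_0`). -/
noncomputable def subst (x : ℕ → ℝ) (k : ℕ) : ℝ :=
  if k ≤ 1 then x k
  else if k % 2 = 0 then x (k + 1) else x (k - 1)

lemma sum_shift (f : ℕ → ℝ) (k : ℕ) :
    ∑ i ∈ Finset.range (k+1), f i = f 0 + ∑ i ∈ Finset.Icc 1 k, f i := by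
  induction k with
  | zero => simp
  | succ k ih =>
      rw [Finset.sum_range_succ, ih, Finset.sum_Icc_succ_top (by omega : 1 ≤ k+1)]
      ring
lemma subst_one (x : ℕ → ℝ) : subst x 1 = x 1 := by simp [subst]
lemma subst_even (x : ℕ → ℝ) (i : ℕ) (h : 1 ≤ i) : subst x (2*i) = x (2*i+1) := by
  unfold subst; rw [if_neg (by omega), if_pos (by omega)]
lemma subst_odd (x : ℕ → ℝ) (i : ℕ) (h : 1 ≤ i) : subst x (2*i+1) = x (2*i) := by
  unfold subst; rw [if_neg (by omega), if_neg (by omega)]; norm_num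
lemma uPt_subst (x y : ℕ → ℝ) (k : ℕ) :
    uPt (subst x) (subst y) k = (-(wPt x y k).1, (wPt x y k).2) := by
  have hLx : ∑ i ∈ Finset.Icc 1 k, (-1:ℝ)^i * subst x (2*i)
      = ∑ i ∈ Finset.Icc 1 k, (-1:ℝ)^i * x (2*i+1) :=
    Finset.sum_congr rfl fun i hi => by rw [subst_even x i (Finset.mem_Icc.mp hi).1]
  have hLy : ∑ i ∈ Finset.Icc 1 k, (-1:ℝ)^i * subst y (2*i)
      = ∑ i ∈ Finset.Icc 1 k, (-1:ℝ)^i * y (2*i+1) :=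
    Finset.sum_congr rfl fun i hi => by rw [subst_even y i (Finset.mem_Icc.mp hi).1]
  have hR : -∑ i ∈ Finset.range (k+1), (-1:ℝ)^(i+1) * x (2*i+1)
      = ∑ i ∈ Finset.range (k+1), (-1:ℝ)^i * x (2*i+1) := by
    rw [← Finset.sum_neg_distrib]
    exact Finset.sum_congr rfl fun i _ => by rw [pow_succ]; ring
  unfold uPt wPt
  simp only [Prod.mk.injEq]
  constructor
  · rw [subst_one, hLx, hR, sum_shift (fun i => (-1:ℝ)^i * x (2*i+1))]
    norm_num
  · rw [subst_one, hLy, sum_shift (fun i => (-1:ℝ)^i * y (2*i+1))]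
    norm_num
lemma wPt_subst (x y : ℕ → ℝ) (k : ℕ) :
    wPt (subst x) (subst y) k = (-(uPt x y k).1, (uPt x y k).2) := by
  have hLx : ∑ i ∈ Finset.Icc 1 k, (-1:ℝ)^(i+1) * subst x (2*i+1)
      = ∑ i ∈ Finset.Icc 1 k, (-1:ℝ)^(i+1) * x (2*i) :=
    Finset.sum_congr rfl fun i hi => by rw [subst_odd x i (Finset.mem_Icc.mp hi).1]
  have hLy : ∑ i ∈ Finset.Icc 1 k, (-1:ℝ)^i * subst y (2*i+1)
      = ∑ i ∈ Finset.Icc 1 k, (-1:ℝ)^i * y (2*i) :=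
    Finset.sum_congr rfl fun i hi => by rw [subst_odd y i (Finset.mem_Icc.mp hi).1]
  have hR : ∑ i ∈ Finset.Icc 1 k, (-1:ℝ)^(i+1) * x (2*i)
      = -∑ i ∈ Finset.Icc 1 k, (-1:ℝ)^i * x (2*i) := by
    rw [← Finset.sum_neg_distrib]
    exact Finset.sum_congr rfl fun i _ => by rw [pow_succ]; ring
  unfold uPt wPt
  simp only [Prod.mk.injEq]
  constructor
  · rw [sum_shift (fun i => (-1:ℝ)^(i+1) * subst x (2*i+1)), hLx, hR]
    norm_num [subst_one]
    ring
  · rw [sum_shift (fun i => (-1:ℝ)^i * subst y (2*i+1)), hLy]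
    norm_num [subst_one]
lemma vPt_mid (n : ℕ) (x y : ℕ → ℝ) (i : ℕ) (h : i = n / 2) :
    vPt n x y i = (0, 1) := by unfold vPt; rw [if_pos h]
lemma vPt_u1 (n : ℕ) (x y : ℕ → ℝ) (i : ℕ) (hn : 2 ≤ n)
    (h1 : 1 ≤ i) (h2 : i ≤ (n - 2) / 4) :
    vPt n x y i = uPt x y (2 * i - 1) := by
  unfold vPt; rw [if_neg (by omega), if_pos ⟨h1, h2⟩]
lemma vPt_w2 (n : ℕ) (x y : ℕ → ℝ) (i : ℕ)
    (h1 : (n - 2) / 4 < i) (h2 : i < n / 2) :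
    vPt n x y i = wPt x y (2 * (n / 2 - i - 1)) := by
  unfold vPt; rw [if_neg (by omega), if_neg (by omega), if_pos h2]
lemma vPt_u2 (n : ℕ) (x y : ℕ → ℝ) (i : ℕ)
    (h1 : n / 2 < i) (h2 : i ≤ n / 2 + ((n - 2) + 3) / 4) :
    vPt n x y i = uPt x y (2 * (i - n / 2 - 1)) := by
  unfold vPt; rw [if_neg (by omega), if_neg (by omega), if_neg (by omega), if_pos ⟨h1, h2⟩]
lemma vPt_w1 (n : ℕ) (x y : ℕ → ℝ) (i : ℕ)
    (h1 : n / 2 + ((n - 2) + 3) / 4 < i) (h2 : i < n) :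
    vPt n x y i = wPt x y (2 * (n - i) - 1) := by
  unfold vPt
  rw [if_neg (by omega), if_neg (by omega), if_neg (by omega), if_neg (by omega), if_pos h2]

/-- Applying the substitution `σ` amounts to reflecting each vertex across the vertical
axis and reversing the numbering of the vertices: the vertices `v̂` built from
`σ(x,y)` satisfy `v̂_i = (−x̄_{n−i}, ȳ_{n−i})` for `i = 1, …, n−1`,
and `v̂_n = v_n = (0,0)`. -/
theorem subst_reflects_and_reverses_vertices (n : ℕ) (hn : 6 ≤ n) (hne : Even n)
    (x y : ℕ → ℝ) :
    (∀ i, 1 ≤ i → i ≤ n - 1 →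
        vPt n (subst x) (subst y) i
          = (-(vPt n x y (n - i)).1, (vPt n x y (n - i)).2)) ∧
    vPt n (subst x) (subst y) n = (0, 0) ∧ vPt n x y n = (0, 0) := by
  obtain ⟨m, hm⟩ := hne
  refine ⟨fun i h1 h2 => ?_, ?_, ?_⟩
  · by_cases hA : i ≤ (n - 2) / 4
    · rw [vPt_u1 n _ _ i (by omega) h1 hA, uPt_subst,
        vPt_w1 n x y (n - i) (by omega) (by omega)]
      have : 2 * (n - (n - i)) - 1 = 2 * i - 1 := by omega
      rw [this]
    · by_cases hB : i < n / 2
      · rw [vPt_w2 n _ _ i (by omega) hB, wPt_subst,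
          vPt_u2 n x y (n - i) (by omega) (by omega)]
        have : 2 * (n - i - n / 2 - 1) = 2 * (n / 2 - i - 1) := by omega
        rw [this]
      · by_cases hC : i = n / 2
        · rw [vPt_mid n _ _ i hC, vPt_mid n x y (n - i) (by omega)]
          norm_num
        · by_cases hD : i ≤ n / 2 + ((n - 2) + 3) / 4
          · rw [vPt_u2 n _ _ i (by omega) hD, uPt_subst,
              vPt_w2 n x y (n - i) (by omega) (by omega)]
            have : 2 * (n / 2 - (n - i) - 1) = 2 * (i - n / 2 - 1) := by omega
            rw [this]
          · rw [vPt_w1 n _ _ i (by omega) (by omega), wPt_subst,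
              vPt_u1 n x y (n - i) (by omega) (by omega) (by omega)]
  · unfold vPt; split_ifs <;> first | rfl | omega
  · unfold vPt; split_ifs <;> first | rfl | omega
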